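/- arXiv:1507.01394 — 9 statements merged into one kernel-verified Lean document; each statement's English description precedes it below -/
import Mathlib

section
/- On S², with Z = x+iy, set Xₙ = Re(Zⁿ) and Yₙ = Im(Zⁿ). Then Γ(z,z) = 1−z², Γ(z,Xₙ) = −n z Xₙ, Γ(z,Yₙ) = −n z Yₙ, Γ(Xₙ,Xₙ) = n²((1−z²)^{n−1} − Xₙ²), Γ(Yₙ,Yₙ) = n²((1−z²)^{n−1} − Yₙ²), and Γ(Xₙ,Yₙ) = −n² Xₙ Yₙ, where all identities hold modulo the relation x²+y²+z² = 1. -/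
/-!
`Γ` is a symmetric biderivation, and on linear forms `Γ(e*, f*) = e·f − e* f*`. The forms
`Z = x + iy` and `Z̄ = x − iy` are isotropic (`e·e = 0`), so `Γ(Z, Z) = −Z²`, `Γ(Z̄, Z̄) = −Z̄²`,
`Γ(Z, Z̄) = 2 − Z Z̄` and `Γ(z, Z) = −z Z`. The chain rule then gives
`Γ(Zⁿ, Z̄ⁿ) = n² (2 (Z Z̄)ⁿ⁻¹ − (Z Z̄)ⁿ)` and its companions, from which all six identities hold
exactly as polynomial identities with `Z Z̄ = x² + y²` in place of `1 − z²`. The sphere is used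
only to replace `x² + y²` by `1 − z²`.
-/

open MvPolynomial

/-- The spherical carré du champ operator on polynomials in three variables:
`Γ(f,g) = ∇f·∇g − (x·∇f)(x·∇g)`. -/
noncomputable def sphGammaC (f g : MvPolynomial (Fin 3) ℂ) : MvPolynomial (Fin 3) ℂ :=
  (∑ i : Fin 3, pderiv i f * pderiv i g)
    - (∑ i : Fin 3, X i * pderiv i f) * (∑ i : Fin 3, X i * pderiv i g)

open Complex

theorem natCast_mul_pow_sub_one_mul {R : Type*} [CommSemiring R] (n : ℕ) (a : R) :
    (n : R) * a ^ (n - 1) * a = n * a ^ n := by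
  cases n with
  | zero => simp
  | succ n => rw [mul_assoc, Nat.add_sub_cancel, ← pow_succ]

section Biderivation

variable (f g h : MvPolynomial (Fin 3) ℂ)

theorem sphGammaC_comm : sphGammaC f g = sphGammaC g f := by
  simp only [sphGammaC, mul_comm (pderiv _ f)]
  ring

theorem sphGammaC_add_right : sphGammaC f (g + h) = sphGammaC f g + sphGammaC f h := by
  simp only [sphGammaC, map_add, mul_add, Finset.sum_add_distrib]
  ring

theorem sphGammaC_sub_right : sphGammaC f (g - h) = sphGammaC f g - sphGammaC f h := by
  simp only [sphGammaC, map_sub, mul_sub, Finset.sum_sub_distrib]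
  ring

theorem sphGammaC_C_mul_right (a : ℂ) : sphGammaC f (C a * g) = C a * sphGammaC f g := by
  simp only [sphGammaC, pderiv_C_mul, Fin.sum_univ_three]
  ring

theorem sphGammaC_add_left : sphGammaC (f + g) h = sphGammaC f h + sphGammaC g h := by
  rw [sphGammaC_comm, sphGammaC_add_right, sphGammaC_comm h, sphGammaC_comm h]

theorem sphGammaC_sub_left : sphGammaC (f - g) h = sphGammaC f h - sphGammaC g h := by
  rw [sphGammaC_comm, sphGammaC_sub_right, sphGammaC_comm h, sphGammaC_comm h]

theorem sphGammaC_C_mul_left (a : ℂ) : sphGammaC (C a * f) g = C a * sphGammaC f g := by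
  rw [sphGammaC_comm, sphGammaC_C_mul_right, sphGammaC_comm]

theorem sphGammaC_pow_right (n : ℕ) :
    sphGammaC f (g ^ n) = n * g ^ (n - 1) * sphGammaC f g := by
  simp only [sphGammaC, pderiv_pow, Fin.sum_univ_three]
  ring

theorem sphGammaC_pow_pow (m n : ℕ) :
    sphGammaC (f ^ m) (g ^ n) = m * n * f ^ (m - 1) * g ^ (n - 1) * sphGammaC f g := by
  rw [sphGammaC_pow_right, sphGammaC_comm, sphGammaC_pow_right, sphGammaC_comm]
  ring

variable {f g}

theorem sphGammaC_pow_right_of_eq_mul {c : MvPolynomial (Fin 3) ℂ}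
    (hfg : sphGammaC f g = c * g) (n : ℕ) : sphGammaC f (g ^ n) = n * c * g ^ n := by
  rw [sphGammaC_pow_right, hfg]
  linear_combination c * natCast_mul_pow_sub_one_mul n g

theorem sphGammaC_pow_pow_of_add_mul_eq {c : MvPolynomial (Fin 3) ℂ}
    (hfg : sphGammaC f g + f * g = c) (n : ℕ) :
    sphGammaC (f ^ n) (g ^ n) = n ^ 2 * (c * (f * g) ^ (n - 1) - (f * g) ^ n) := by
  rw [sphGammaC_pow_pow, eq_sub_of_add_eq hfg]
  linear_combination -(n : MvPolynomial (Fin 3) ℂ) * natCast_mul_pow_sub_one_mul n (f * g)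

end Biderivation

noncomputable def linearForm (e : Fin 3 → ℂ) : MvPolynomial (Fin 3) ℂ := ∑ i, C (e i) * X i

theorem pderiv_linearForm (e : Fin 3 → ℂ) (j : Fin 3) : pderiv j (linearForm e) = C (e j) := by
  simp [linearForm, pderiv_X, Pi.single_apply]

theorem sphGammaC_linearForm (e e' : Fin 3 → ℂ) :
    sphGammaC (linearForm e) (linearForm e') = C (e ⬝ᵥ e') - linearForm e * linearForm e' := by
  simp only [sphGammaC, pderiv_linearForm]
  simp only [linearForm, dotProduct, map_add, map_mul, Fin.sum_univ_three]
  ring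

noncomputable def zPoly : MvPolynomial (Fin 3) ℂ := X 0 + C I * X 1

noncomputable def zbarPoly : MvPolynomial (Fin 3) ℂ := X 0 - C I * X 1

theorem zPoly_eq_linearForm : zPoly = linearForm ![1, I, 0] := by
  simp [zPoly, linearForm, Fin.sum_univ_three]

theorem zbarPoly_eq_linearForm : zbarPoly = linearForm ![1, -I, 0] := by
  simp [zbarPoly, linearForm, Fin.sum_univ_three, sub_eq_add_neg]

theorem X_two_eq_linearForm : (X 2 : MvPolynomial (Fin 3) ℂ) = linearForm ![0, 0, 1] := by
  simp [linearForm, Fin.sum_univ_three]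

theorem sphGammaC_X_two_X_two : sphGammaC (X 2) (X 2) = 1 - X 2 ^ 2 := by
  simp [X_two_eq_linearForm, sphGammaC_linearForm, dotProduct, Fin.sum_univ_three, sq]

theorem sphGammaC_X_two_zPoly : sphGammaC (X 2) zPoly = -X 2 * zPoly := by
  simp [X_two_eq_linearForm, zPoly_eq_linearForm, sphGammaC_linearForm, dotProduct,
    Fin.sum_univ_three]

theorem sphGammaC_X_two_zbarPoly : sphGammaC (X 2) zbarPoly = -X 2 * zbarPoly := by
  simp [X_two_eq_linearForm, zbarPoly_eq_linearForm, sphGammaC_linearForm, dotProduct,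
    Fin.sum_univ_three]

theorem sphGammaC_zPoly_zPoly_add_mul : sphGammaC zPoly zPoly + zPoly * zPoly = 0 := by
  simp [zPoly_eq_linearForm, sphGammaC_linearForm, dotProduct, Fin.sum_univ_three]

theorem sphGammaC_zbarPoly_zbarPoly_add_mul :
    sphGammaC zbarPoly zbarPoly + zbarPoly * zbarPoly = 0 := by
  simp [zbarPoly_eq_linearForm, sphGammaC_linearForm, dotProduct, Fin.sum_univ_three]

theorem sphGammaC_zPoly_zbarPoly_add_mul : sphGammaC zPoly zbarPoly + zPoly * zbarPoly = 2 := by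
  simp [zPoly_eq_linearForm, zbarPoly_eq_linearForm, sphGammaC_linearForm, dotProduct,
    Fin.sum_univ_three, one_add_one_eq_two, map_ofNat]

noncomputable def reZPow (n : ℕ) : MvPolynomial (Fin 3) ℂ :=
  C (1 / 2 : ℂ) * (zPoly ^ n + zbarPoly ^ n)

noncomputable def imZPow (n : ℕ) : MvPolynomial (Fin 3) ℂ :=
  C (1 / (2 * I) : ℂ) * (zPoly ^ n - zbarPoly ^ n)

theorem C_half_sq_mul_four : (C (1 / 2 : ℂ) : MvPolynomial (Fin 3) ℂ) ^ 2 * 4 = 1 := by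
  rw [← map_pow, ← map_ofNat C 4, ← map_mul]
  norm_num

theorem C_inv_two_I_sq_mul_four : (C (1 / (2 * I) : ℂ) : MvPolynomial (Fin 3) ℂ) ^ 2 * 4 = -1 := by
  have h : (1 / (2 * I)) ^ 2 * 4 = (-1 : ℂ) := by
    rw [div_pow, one_pow, mul_pow, I_sq]
    norm_num
  rw [← map_pow, ← map_ofNat C 4, ← map_mul, h, map_neg, map_one]

theorem sphGammaC_X_two_reZPow (n : ℕ) :
    sphGammaC (X 2) (reZPow n) = (n : MvPolynomial (Fin 3) ℂ) * -X 2 * reZPow n := by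
  rw [reZPow, sphGammaC_C_mul_right, sphGammaC_add_right,
    sphGammaC_pow_right_of_eq_mul sphGammaC_X_two_zPoly,
    sphGammaC_pow_right_of_eq_mul sphGammaC_X_two_zbarPoly]
  ring

theorem sphGammaC_X_two_imZPow (n : ℕ) :
    sphGammaC (X 2) (imZPow n) = (n : MvPolynomial (Fin 3) ℂ) * -X 2 * imZPow n := by
  rw [imZPow, sphGammaC_C_mul_right, sphGammaC_sub_right,
    sphGammaC_pow_right_of_eq_mul sphGammaC_X_two_zPoly,
    sphGammaC_pow_right_of_eq_mul sphGammaC_X_two_zbarPoly]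
  ring

theorem sphGammaC_reZPow_reZPow (n : ℕ) :
    sphGammaC (reZPow n) (reZPow n) = n ^ 2 * ((zPoly * zbarPoly) ^ (n - 1) - reZPow n ^ 2) := by
  rw [reZPow, sphGammaC_C_mul_left, sphGammaC_C_mul_right, sphGammaC_add_left,
    sphGammaC_add_right, sphGammaC_add_right, sphGammaC_comm (zbarPoly ^ n),
    sphGammaC_pow_pow_of_add_mul_eq sphGammaC_zPoly_zPoly_add_mul,
    sphGammaC_pow_pow_of_add_mul_eq sphGammaC_zbarPoly_zbarPoly_add_mul,
    sphGammaC_pow_pow_of_add_mul_eq sphGammaC_zPoly_zbarPoly_add_mul]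
  linear_combination (n ^ 2 * (zPoly * zbarPoly) ^ (n - 1)) * C_half_sq_mul_four

theorem sphGammaC_imZPow_imZPow (n : ℕ) :
    sphGammaC (imZPow n) (imZPow n) = n ^ 2 * ((zPoly * zbarPoly) ^ (n - 1) - imZPow n ^ 2) := by
  rw [imZPow, sphGammaC_C_mul_left, sphGammaC_C_mul_right, sphGammaC_sub_left,
    sphGammaC_sub_right, sphGammaC_sub_right, sphGammaC_comm (zbarPoly ^ n),
    sphGammaC_pow_pow_of_add_mul_eq sphGammaC_zPoly_zPoly_add_mul,
    sphGammaC_pow_pow_of_add_mul_eq sphGammaC_zbarPoly_zbarPoly_add_mul,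
    sphGammaC_pow_pow_of_add_mul_eq sphGammaC_zPoly_zbarPoly_add_mul]
  linear_combination (-n ^ 2 * (zPoly * zbarPoly) ^ (n - 1)) * C_inv_two_I_sq_mul_four

theorem sphGammaC_reZPow_imZPow (n : ℕ) :
    sphGammaC (reZPow n) (imZPow n) = -n ^ 2 * reZPow n * imZPow n := by
  rw [reZPow, imZPow, sphGammaC_C_mul_left, sphGammaC_C_mul_right, sphGammaC_add_left,
    sphGammaC_sub_right, sphGammaC_sub_right, sphGammaC_comm (zbarPoly ^ n),
    sphGammaC_pow_pow_of_add_mul_eq sphGammaC_zPoly_zPoly_add_mul,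
    sphGammaC_pow_pow_of_add_mul_eq sphGammaC_zbarPoly_zbarPoly_add_mul]
  ring

theorem eval_zPoly_mul_zbarPoly {x y z : ℝ} (h : x ^ 2 + y ^ 2 + z ^ 2 = 1) :
    eval ![(x : ℂ), y, z] (zPoly * zbarPoly) = 1 - (z : ℂ) ^ 2 := by
  have h' : (x : ℂ) ^ 2 + (y : ℂ) ^ 2 + (z : ℂ) ^ 2 = 1 := by exact_mod_cast h
  simp only [zPoly, zbarPoly, map_mul, map_add, map_sub, eval_X, eval_C, Matrix.cons_val_zero,
    Matrix.cons_val_one]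
  linear_combination h' - (y : ℂ) ^ 2 * I_sq

theorem stmt1_general (n : ℕ) (x y z : ℝ) (h : x ^ 2 + y ^ 2 + z ^ 2 = 1) :
    let Z : MvPolynomial (Fin 3) ℂ := X 0 + C Complex.I * X 1
    let Zb : MvPolynomial (Fin 3) ℂ := X 0 - C Complex.I * X 1
    let Xn : MvPolynomial (Fin 3) ℂ := C (1 / 2 : ℂ) * (Z ^ n + Zb ^ n)
    let Yn : MvPolynomial (Fin 3) ℂ := C (1 / (2 * Complex.I) : ℂ) * (Z ^ n - Zb ^ n)
    let Pz : MvPolynomial (Fin 3) ℂ := X 2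
    let ev : MvPolynomial (Fin 3) ℂ → ℂ := eval ![(x : ℂ), (y : ℂ), (z : ℂ)]
    ev (sphGammaC Pz Pz) = 1 - (z : ℂ) ^ 2 ∧
    ev (sphGammaC Pz Xn) = -(n : ℂ) * (z : ℂ) * ev Xn ∧
    ev (sphGammaC Pz Yn) = -(n : ℂ) * (z : ℂ) * ev Yn ∧
    ev (sphGammaC Xn Xn) = (n : ℂ) ^ 2 * ((1 - (z : ℂ) ^ 2) ^ (n - 1) - (ev Xn) ^ 2) ∧
    ev (sphGammaC Yn Yn) = (n : ℂ) ^ 2 * ((1 - (z : ℂ) ^ 2) ^ (n - 1) - (ev Yn) ^ 2) ∧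
    ev (sphGammaC Xn Yn) = -(n : ℂ) ^ 2 * ev Xn * ev Yn := by
  intro Z Zb Xn Yn Pz ev
  rw [show Xn = reZPow n from rfl, show Yn = imZPow n from rfl, show Pz = X 2 from rfl,
    sphGammaC_X_two_X_two, sphGammaC_X_two_reZPow, sphGammaC_X_two_imZPow,
    sphGammaC_reZPow_reZPow, sphGammaC_imZPow_imZPow, sphGammaC_reZPow_imZPow]
  simp [ev, eval_zPoly_mul_zbarPoly h]

theorem stmt1 (n : ℕ) (hn : 1 ≤ n) (x y z : ℝ) (h : x ^ 2 + y ^ 2 + z ^ 2 = 1) :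
    let Z : MvPolynomial (Fin 3) ℂ := X 0 + C Complex.I * X 1
    let Zb : MvPolynomial (Fin 3) ℂ := X 0 - C Complex.I * X 1
    let Xn : MvPolynomial (Fin 3) ℂ := C (1 / 2 : ℂ) * (Z ^ n + Zb ^ n)
    let Yn : MvPolynomial (Fin 3) ℂ := C (1 / (2 * Complex.I) : ℂ) * (Z ^ n - Zb ^ n)
    let Pz : MvPolynomial (Fin 3) ℂ := X 2
    let ev : MvPolynomial (Fin 3) ℂ → ℂ := eval ![(x : ℂ), (y : ℂ), (z : ℂ)]
    ev (sphGammaC Pz Pz) = 1 - (z : ℂ) ^ 2 ∧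
    ev (sphGammaC Pz Xn) = -(n : ℂ) * (z : ℂ) * ev Xn ∧
    ev (sphGammaC Pz Yn) = -(n : ℂ) * (z : ℂ) * ev Yn ∧
    ev (sphGammaC Xn Xn) = (n : ℂ) ^ 2 * ((1 - (z : ℂ) ^ 2) ^ (n - 1) - (ev Xn) ^ 2) ∧
    ev (sphGammaC Yn Yn) = (n : ℂ) ^ 2 * ((1 - (z : ℂ) ^ 2) ^ (n - 1) - (ev Yn) ^ 2) ∧
    ev (sphGammaC Xn Yn) = -(n : ℂ) ^ 2 * ev Xn * ev Yn :=
  stmt1_general n x y z h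
end

section
/- Let Γ₁ be the symmetric bilinear form on polynomials in (θ₁,θ₂) determined by Γ₁(θ₁,θ₁) = 1−θ₁², Γ₁(θ₁,θ₂) = −n θ₁θ₂, Γ₁(θ₂,θ₂) = n²((1−θ₁²)^{n−1} − θ₂²), extended by the chain rule. Then with P(θ₁,θ₂) = (1−θ₁²)ⁿ − θ₂², the polynomial P divides Γ₁(θᵢ,P) for i=1,2; specifically Γ₁(θ₁,P) = −2n θ₁ P and Γ₁(θ₂,P) = −2n² θ₂ P. -/
open MvPolynomial

/-! With `u = 1 - θ₁²` one has `∂₁P = -2n θ₁ u^(n-1)` and `∂₂P = -2θ₂`; both identities reduce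
to `u · u^(n-1) = uⁿ`, which is exactly what the factor `1 - θ₁²` in `Γ₁(θ₁,θ₁)` and the
`θ₁²` produced by `Γ₁(θ₁,θ₂)` supply. -/

section

variable {R : Type*} [CommRing R]

/-- The factor `n` absorbs the truncated subtraction `n - 1` at `n = 0`. -/
lemma natCast_mul_pow_pred_mul (a : R) (n : ℕ) : (n : R) * a ^ (n - 1) * a = n * a ^ n := by
  rcases Nat.eq_zero_or_pos n with rfl | hn
  · simp
  · rw [mul_assoc, pow_sub_one_mul hn.ne']

lemma pderiv_zero_one_sub_sq_pow_sub_sq (n : ℕ) :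
    pderiv 0 ((1 - X 0 ^ 2) ^ n - X 1 ^ 2 : MvPolynomial (Fin 2) R) =
      -2 * (n : MvPolynomial (Fin 2) R) * X 0 * (1 - X 0 ^ 2) ^ (n - 1) := by
  simp only [map_sub, Derivation.leibniz_pow, Derivation.map_one_eq_zero, pderiv_X_self,
    pderiv_X_of_ne (show (1 : Fin 2) ≠ 0 by decide), smul_eq_mul, nsmul_eq_mul]
  ring

lemma pderiv_one_one_sub_sq_pow_sub_sq (n : ℕ) :
    pderiv 1 ((1 - X 0 ^ 2) ^ n - X 1 ^ 2 : MvPolynomial (Fin 2) R) = -2 * X 1 := by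
  simp [Derivation.leibniz_pow]

end

theorem stmt3_general (n : ℕ) :
    let θ₁ : MvPolynomial (Fin 2) ℝ := X 0
    let θ₂ : MvPolynomial (Fin 2) ℝ := X 1
    let g11 : MvPolynomial (Fin 2) ℝ := 1 - θ₁ ^ 2
    let g12 : MvPolynomial (Fin 2) ℝ := -(n : MvPolynomial (Fin 2) ℝ) * θ₁ * θ₂
    let g22 : MvPolynomial (Fin 2) ℝ :=
      (n : MvPolynomial (Fin 2) ℝ) ^ 2 * ((1 - θ₁ ^ 2) ^ (n - 1) - θ₂ ^ 2)
    let P : MvPolynomial (Fin 2) ℝ := (1 - θ₁ ^ 2) ^ n - θ₂ ^ 2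
    g11 * pderiv 0 P + g12 * pderiv 1 P = -2 * (n : MvPolynomial (Fin 2) ℝ) * θ₁ * P ∧
    g12 * pderiv 0 P + g22 * pderiv 1 P = -2 * (n : MvPolynomial (Fin 2) ℝ) ^ 2 * θ₂ * P := by
  intro θ₁ θ₂ g11 g12 g22 P
  have h := natCast_mul_pow_pred_mul (1 - θ₁ ^ 2) n
  simp only [g11, g12, g22, P, θ₁, θ₂, pderiv_zero_one_sub_sq_pow_sub_sq,
    pderiv_one_one_sub_sq_pow_sub_sq]
  exact ⟨by linear_combination (-2 * θ₁) * h,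
    by linear_combination (-2 * (n : MvPolynomial (Fin 2) ℝ) * θ₂) * h⟩

/-- For the biderivation `Γ₁` on `ℝ[θ₁,θ₂]` determined by its values on the generators,
the chain rule gives `Γ₁(θᵢ, P) = ∑ⱼ Γ₁(θᵢ,θⱼ) ∂ⱼP`.  The boundary equations state that
`P` divides `Γ₁(θᵢ,P)`, with the explicit quotients below. -/
theorem stmt3 (n : ℕ) (hn : 1 ≤ n) :
    let θ₁ : MvPolynomial (Fin 2) ℝ := X 0
    let θ₂ : MvPolynomial (Fin 2) ℝ := X 1
    let g11 : MvPolynomial (Fin 2) ℝ := 1 - θ₁ ^ 2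
    let g12 : MvPolynomial (Fin 2) ℝ := -(n : MvPolynomial (Fin 2) ℝ) * θ₁ * θ₂
    let g22 : MvPolynomial (Fin 2) ℝ :=
      (n : MvPolynomial (Fin 2) ℝ) ^ 2 * ((1 - θ₁ ^ 2) ^ (n - 1) - θ₂ ^ 2)
    let P : MvPolynomial (Fin 2) ℝ := (1 - θ₁ ^ 2) ^ n - θ₂ ^ 2
    g11 * pderiv 0 P + g12 * pderiv 1 P = -2 * (n : MvPolynomial (Fin 2) ℝ) * θ₁ * P ∧
    g12 * pderiv 0 P + g22 * pderiv 1 P = -2 * (n : MvPolynomial (Fin 2) ℝ) ^ 2 * θ₂ * P :=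
  stmt3_general n
end

section
/- On S², with θ₁ = z², θ₂ = Re((x+iy)ⁿ), η = z·Im((x+iy)ⁿ), the spherical carré du champ satisfies Γ(η,η) = (1−θ₁)^{n−1}(1+(n²−1)θ₁) − θ₂² − (n+1)²η², Γ(θ₁,η) = −2η((n+1)θ₁ − 1), and Γ(θ₂,η) = −n(n+1)θ₂η, modulo x²+y²+z² = 1. -/
open MvPolynomial

set_option maxHeartbeats 1000000 in
theorem stmt9 (n : ℕ) (hn : 1 ≤ n) (x y z : ℝ) (h : x ^ 2 + y ^ 2 + z ^ 2 = 1) :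
    let Z : MvPolynomial (Fin 3) ℂ := X 0 + C Complex.I * X 1
    let Zb : MvPolynomial (Fin 3) ℂ := X 0 - C Complex.I * X 1
    let θ₁ : MvPolynomial (Fin 3) ℂ := (X 2) ^ 2
    let θ₂ : MvPolynomial (Fin 3) ℂ := C (1 / 2 : ℂ) * (Z ^ n + Zb ^ n)
    let η : MvPolynomial (Fin 3) ℂ := X 2 * (C (1 / (2 * Complex.I) : ℂ) * (Z ^ n - Zb ^ n))
    let ev : MvPolynomial (Fin 3) ℂ → ℂ := eval ![(x : ℂ), (y : ℂ), (z : ℂ)]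
    ev (sphGammaC η η)
        = (1 - ev θ₁) ^ (n - 1) * (1 + ((n : ℂ) ^ 2 - 1) * ev θ₁) - (ev θ₂) ^ 2
          - ((n : ℂ) + 1) ^ 2 * (ev η) ^ 2 ∧
    ev (sphGammaC θ₁ η) = -2 * ev η * (((n : ℂ) + 1) * ev θ₁ - 1) ∧
    ev (sphGammaC θ₂ η) = -(n : ℂ) * ((n : ℂ) + 1) * ev θ₂ * ev η := by
  obtain ⟨m, rfl⟩ : ∃ m, n = m + 1 := ⟨n - 1, (Nat.succ_pred_eq_of_pos hn).symm⟩
  intro Z Zb θ₁ θ₂ η ev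
  have hc : ((x:ℂ) + Complex.I * y) * ((x:ℂ) - Complex.I * y) = 1 - (z:ℂ)^2 := by
    have : ((x:ℂ)^2 + y^2 + z^2) = 1 := by exact_mod_cast congrArg (fun r : ℝ => (r:ℂ)) h
    have hI := Complex.I_sq
    linear_combination this - (y:ℂ)^2 * hI
  have hdiv : (1 / (2 * Complex.I) : ℂ) = -Complex.I/2 := by
    field_simp
    linear_combination Complex.I_sq
  have e1 : ((2:Fin 3) = 0) = False := by decide
  have e2 : ((2:Fin 3) = 1) = False := by decide
  have e3 : ((0:Fin 3) = 1) = False := by decide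
  have e4 : ((1:Fin 3) = 0) = False := by decide
  have e5 : ((0:Fin 3) = 2) = False := by decide
  have e6 : ((1:Fin 3) = 2) = False := by decide
  simp only [sphGammaC, Z, Zb, θ₁, θ₂, η, ev, Fin.sum_univ_three, pderiv_mul, pderiv_pow,
    pderiv_C_mul, map_add, map_sub, map_mul, map_pow, pderiv_X, pderiv_C, Pi.single_apply, map_natCast, map_ofNat, map_one, map_zero,
    eval_add, eval_sub, eval_mul, eval_pow, eval_X, eval_C, Nat.add_sub_cancel,
    Matrix.cons_val_zero, Matrix.cons_val_one, Matrix.head_cons, Matrix.cons_val_two,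
    Matrix.tail_cons, hdiv, e1, e2, e3, e4, e5, e6, if_true, if_false, zero_mul, mul_zero, add_zero, zero_add, mul_one, one_mul, Nat.cast_add, Nat.cast_one, Nat.cast_ofNat, pow_one]
  set w : ℂ := (x:ℂ) + Complex.I * y with hwdef
  set wb : ℂ := (x:ℂ) - Complex.I * y with hwbdef
  refine ⟨?_, ?_, ?_⟩
  · rw [show ((1:ℂ) - (z:ℂ)^2)^m = w^m * wb^m from by rw [← mul_pow, hc]]
    linear_combination (w^m * wb^m) * hc +
      ((z:ℂ)^2*((m:ℂ)+1)^2*(w^m - wb^m)^2/4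
        + (z:ℂ)^2*((m:ℂ)+1)^2*(w^m + wb^m)^2*(Complex.I^2-1)/4
        + (w^(m+1) - wb^(m+1))^2/4) * Complex.I_sq
  · ring
  · linear_combination (-(z:ℂ)*Complex.I*((m:ℂ)+1)^2*(w^m*w^m - wb^m*wb^m)/4) * Complex.I_sq
end

section
/- For the biderivation Γ₅ on ℝ[θ₁,θ₂,η] of the dihedral model (entries as in the matrix: Γ₅(θ₁,θ₁)=4θ₁(1−θ₁), Γ₅(θ₁,θ₂)=−2nθ₁θ₂, Γ₅(θ₁,η)=−2η((n+1)θ₁−1), Γ₅(θ₂,θ₂)=n²((1−θ₁)^{n−1}−θ₂²), Γ₅(θ₂,η)=−n(n+1)θ₂η, Γ₅(η,η)=(1−θ₁)^{n−1}(1+(n²−1)θ₁)−θ₂²−(n+1)²η²), the syzygy polynomial P₁ = θ₁(1−θ₁)ⁿ − θ₁θ₂² − η² satisfies Γ₅(θ₁,P₁) = 4(1−(n+1)θ₁)P₁, Γ₅(θ₂,P₁) = −2n(n+1)θ₂P₁, Γ₅(η,P₁) = −2(n+1)²ηP₁. -/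
/-!
With `θ₁, θ₂, η = X 0, X 1, X 2`, `syzygy n` is `P₁`. Once its partial derivatives are computed,
writing `(1 - θ₁)ⁿ = (1 - θ₁) (1 - θ₁)ⁿ⁻¹` turns each of the three identities into a polynomial
identity in `θ₁`, `θ₂`, `η`, `n` and `(1 - θ₁)ⁿ⁻¹`.
-/

open MvPolynomial

namespace DihedralModel

variable {R : Type*} [CommRing R]

local notation "𝒫" => MvPolynomial (Fin 3) R

noncomputable def syzygy (n : ℕ) : 𝒫 :=
  X 0 * (1 - X 0) ^ n - X 0 * X 1 ^ 2 - X 2 ^ 2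

theorem pderiv_zero_syzygy (n : ℕ) :
    pderiv 0 (syzygy n : 𝒫) =
      (1 - X 0) ^ n - (n : 𝒫) * X 0 * (1 - X 0) ^ (n - 1) - X 1 ^ 2 := by
  simp only [syzygy, map_sub, Derivation.leibniz, Derivation.leibniz_pow, Derivation.map_one_eq_zero,
    pderiv_X_self, pderiv_X_of_ne (by decide : (1 : Fin 3) ≠ 0), pderiv_X_of_ne (by decide : (2 : Fin 3) ≠ 0),
    smul_eq_mul, nsmul_eq_mul]
  ring

theorem pderiv_one_syzygy (n : ℕ) :
    pderiv 1 (syzygy n : 𝒫) = -2 * X 0 * X 1 := by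
  simp only [syzygy, map_sub, Derivation.leibniz, Derivation.leibniz_pow, Derivation.map_one_eq_zero,
    pderiv_X_self, pderiv_X_of_ne (by decide : (0 : Fin 3) ≠ 1), pderiv_X_of_ne (by decide : (2 : Fin 3) ≠ 1),
    smul_eq_mul, nsmul_eq_mul]
  ring

theorem pderiv_two_syzygy (n : ℕ) :
    pderiv 2 (syzygy n : 𝒫) = -2 * X 2 := by
  simp only [syzygy, map_sub, Derivation.leibniz, Derivation.leibniz_pow, Derivation.map_one_eq_zero,
    pderiv_X_self, pderiv_X_of_ne (by decide : (0 : Fin 3) ≠ 2), pderiv_X_of_ne (by decide : (1 : Fin 3) ≠ 2),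
    smul_eq_mul, nsmul_eq_mul]
  ring

theorem gamma₅_X0_syzygy (n : ℕ) :
    4 * X 0 * (1 - X 0) * pderiv 0 (syzygy n : 𝒫)
      + -2 * (n : 𝒫) * X 0 * X 1 * pderiv 1 (syzygy n)
      + -2 * X 2 * (((n : 𝒫) + 1) * X 0 - 1) * pderiv 2 (syzygy n) =
      4 * (1 - ((n : 𝒫) + 1) * X 0) * syzygy n := by
  rw [pderiv_zero_syzygy, pderiv_one_syzygy, pderiv_two_syzygy, syzygy]
  cases n with
  | zero => simp only [Nat.cast_zero, zero_tsub, pow_zero]; ring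
  | succ m => simp only [Nat.add_sub_cancel]; push_cast; ring

theorem gamma₅_X1_syzygy (n : ℕ) :
    -2 * (n : 𝒫) * X 0 * X 1 * pderiv 0 (syzygy n : 𝒫)
      + (n : 𝒫) ^ 2 * ((1 - X 0) ^ (n - 1) - X 1 ^ 2) * pderiv 1 (syzygy n)
      + -(n : 𝒫) * ((n : 𝒫) + 1) * X 1 * X 2 * pderiv 2 (syzygy n) =
      -2 * (n : 𝒫) * ((n : 𝒫) + 1) * X 1 * syzygy n := by
  rw [pderiv_zero_syzygy, pderiv_one_syzygy, pderiv_two_syzygy, syzygy]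
  cases n with
  | zero => simp
  | succ m => simp only [Nat.add_sub_cancel]; push_cast; ring

theorem gamma₅_X2_syzygy {n : ℕ} (hn : 1 ≤ n) :
    -2 * X 2 * (((n : 𝒫) + 1) * X 0 - 1) * pderiv 0 (syzygy n : 𝒫)
      + -(n : 𝒫) * ((n : 𝒫) + 1) * X 1 * X 2 * pderiv 1 (syzygy n)
      + ((1 - X 0) ^ (n - 1) * (1 + ((n : 𝒫) ^ 2 - 1) * X 0) - X 1 ^ 2
          - ((n : 𝒫) + 1) ^ 2 * X 2 ^ 2) * pderiv 2 (syzygy n) =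
      -2 * ((n : 𝒫) + 1) ^ 2 * X 2 * syzygy n := by
  obtain ⟨m, rfl⟩ := Nat.exists_eq_add_of_le' hn
  rw [pderiv_zero_syzygy, pderiv_one_syzygy, pderiv_two_syzygy, syzygy, Nat.add_sub_cancel]
  push_cast
  ring

end DihedralModel

open DihedralModel in
/-- For the biderivation `Γ₅` on `ℝ[θ₁,θ₂,η]` determined by its values on generators,
the chain rule gives `Γ₅(θᵢ, P₁) = ∑ⱼ Γ₅(θᵢ, varⱼ) ∂ⱼP₁`. -/
theorem stmt11 (n : ℕ) (hn : 1 ≤ n) :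
    let θ₁ : MvPolynomial (Fin 3) ℝ := X 0
    let θ₂ : MvPolynomial (Fin 3) ℝ := X 1
    let η : MvPolynomial (Fin 3) ℝ := X 2
    let N : MvPolynomial (Fin 3) ℝ := (n : MvPolynomial (Fin 3) ℝ)
    let g11 := 4 * θ₁ * (1 - θ₁)
    let g12 := -2 * N * θ₁ * θ₂
    let g13 := -2 * η * ((N + 1) * θ₁ - 1)
    let g22 := N ^ 2 * ((1 - θ₁) ^ (n - 1) - θ₂ ^ 2)
    let g23 := -N * (N + 1) * θ₂ * η
    let g33 := (1 - θ₁) ^ (n - 1) * (1 + (N ^ 2 - 1) * θ₁) - θ₂ ^ 2 - (N + 1) ^ 2 * η ^ 2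
    let P₁ : MvPolynomial (Fin 3) ℝ := θ₁ * (1 - θ₁) ^ n - θ₁ * θ₂ ^ 2 - η ^ 2
    g11 * pderiv 0 P₁ + g12 * pderiv 1 P₁ + g13 * pderiv 2 P₁ = 4 * (1 - (N + 1) * θ₁) * P₁ ∧
    g12 * pderiv 0 P₁ + g22 * pderiv 1 P₁ + g23 * pderiv 2 P₁ = -2 * N * (N + 1) * θ₂ * P₁ ∧
    g13 * pderiv 0 P₁ + g23 * pderiv 1 P₁ + g33 * pderiv 2 P₁ = -2 * (N + 1) ^ 2 * η * P₁ :=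
  ⟨gamma₅_X0_syzygy n, gamma₅_X1_syzygy n, gamma₅_X2_syzygy hn⟩
end

section
/- On S² ⊂ ℝ³, the spherical carré du champ of O₃ = xyz and O₄ = x⁴+y⁴+z⁴ satisfies Γ(O₃,O₃) = (1−O₄)/2 − 9O₃², Γ(O₃,O₄) = 4O₃(1−3O₄), and Γ(O₄,O₄) = 8(6O₃² + 3O₄ − 1 − 2O₄²), modulo x²+y²+z²−1. -/
/-
Both invariants are homogeneous (of degrees 3 and 4), so by Euler's identity the radial part of
`Γ(f, g)` is `deg f * deg g * f * g`, and `Γ` reduces to the Euclidean gradient pairing minus that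
product. The gradient pairings are `∑ y²z²`, `4 O₃ (x² + y² + z²)` and `16 ∑ x⁶`; on the sphere,
Newton's identities in `x², y², z²` rewrite `∑ y²z² = (1 - O₄)/2` and `∑ x⁶ = (3 O₄ - 1)/2 + 3 O₃²`.
-/

open MvPolynomial

/-- The spherical carré du champ operator on polynomials in three variables:
`Γ(f,g) = ∇f·∇g − (x·∇f)(x·∇g)`. -/
noncomputable def sphGamma (f g : MvPolynomial (Fin 3) ℝ) : MvPolynomial (Fin 3) ℝ :=
  (∑ i : Fin 3, pderiv i f * pderiv i g)
    - (∑ i : Fin 3, X i * pderiv i f) * (∑ i : Fin 3, X i * pderiv i g)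

theorem sphGamma_of_isHomogeneous {f g : MvPolynomial (Fin 3) ℝ} {m n : ℕ}
    (hf : f.IsHomogeneous m) (hg : g.IsHomogeneous n) :
    sphGamma f g = (∑ i : Fin 3, pderiv i f * pderiv i g) - (m * n : ℕ) • (f * g) := by
  rw [sphGamma, hf.sum_X_mul_pderiv, hg.sum_X_mul_pderiv, smul_mul_smul_comm]

section

local notation "O₃" => (X 0 * X 1 * X 2 : MvPolynomial (Fin 3) ℝ)
local notation "O₄" => (X 0 ^ 4 + X 1 ^ 4 + X 2 ^ 4 : MvPolynomial (Fin 3) ℝ)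

theorem sum_pderiv_xyz_mul_pderiv_xyz :
    ∑ i : Fin 3, pderiv i O₃ * pderiv i O₃ =
      X 1 ^ 2 * X 2 ^ 2 + X 0 ^ 2 * X 2 ^ 2 + X 0 ^ 2 * X 1 ^ 2 := by
  simp only [Fin.sum_univ_three, pderiv_mul, pderiv_X, Pi.single_apply, Fin.reduceEq, ↓reduceIte]
  ring

theorem sum_pderiv_xyz_mul_pderiv_sum_pow_four :
    ∑ i : Fin 3, pderiv i O₃ * pderiv i O₄ = 4 * O₃ * (X 0 ^ 2 + X 1 ^ 2 + X 2 ^ 2) := by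
  simp only [Fin.sum_univ_three, map_add, pderiv_mul, pderiv_pow, pderiv_X, Pi.single_apply,
    Fin.reduceEq, ↓reduceIte]
  ring

theorem sum_pderiv_sum_pow_four_mul_pderiv_sum_pow_four :
    ∑ i : Fin 3, pderiv i O₄ * pderiv i O₄ = 16 * (X 0 ^ 6 + X 1 ^ 6 + X 2 ^ 6) := by
  simp only [Fin.sum_univ_three, map_add, pderiv_pow, pderiv_X, Pi.single_apply, Fin.reduceEq,
    ↓reduceIte]
  ring

theorem isHomogeneous_xyz : IsHomogeneous O₃ 3 :=
  ((isHomogeneous_X ℝ 0).mul (isHomogeneous_X ℝ 1)).mul (isHomogeneous_X ℝ 2)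

theorem isHomogeneous_sum_pow_four : IsHomogeneous O₄ 4 := by
  have hX (i : Fin 3) : (X i ^ 4 : MvPolynomial (Fin 3) ℝ).IsHomogeneous 4 := by
    simpa using (isHomogeneous_X ℝ i).pow 4
  exact ((hX 0).add (hX 1)).add (hX 2)

end

theorem stmt13 (x y z : ℝ) (h : x ^ 2 + y ^ 2 + z ^ 2 = 1) :
    let O₃ : MvPolynomial (Fin 3) ℝ := X 0 * X 1 * X 2
    let O₄ : MvPolynomial (Fin 3) ℝ := X 0 ^ 4 + X 1 ^ 4 + X 2 ^ 4
    let ev : MvPolynomial (Fin 3) ℝ → ℝ := eval ![x, y, z]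
    ev (sphGamma O₃ O₃) = (1 - ev O₄) / 2 - 9 * (ev O₃) ^ 2 ∧
    ev (sphGamma O₃ O₄) = 4 * ev O₃ * (1 - 3 * ev O₄) ∧
    ev (sphGamma O₄ O₄) = 8 * (6 * (ev O₃) ^ 2 + 3 * ev O₄ - 1 - 2 * (ev O₄) ^ 2) := by
  intro O₃ O₄ ev
  simp only [O₃, O₄, ev]
  rw [sphGamma_of_isHomogeneous isHomogeneous_xyz isHomogeneous_xyz,
    sphGamma_of_isHomogeneous isHomogeneous_xyz isHomogeneous_sum_pow_four,
    sphGamma_of_isHomogeneous isHomogeneous_sum_pow_four isHomogeneous_sum_pow_four,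
    sum_pderiv_xyz_mul_pderiv_xyz, sum_pderiv_xyz_mul_pderiv_sum_pow_four,
    sum_pderiv_sum_pow_four_mul_pderiv_sum_pow_four]
  simp only [Nat.reduceMul, nsmul_eq_mul, Nat.cast_ofNat, map_sub, map_add, map_mul, map_pow,
    eval_X, eval_ofNat, Matrix.cons_val_zero, Matrix.cons_val_one, Matrix.cons_val]
  have sum_sq_mul_sq :
      y ^ 2 * z ^ 2 + x ^ 2 * z ^ 2 + x ^ 2 * y ^ 2 = (1 - (x ^ 4 + y ^ 4 + z ^ 4)) / 2 := by
    linear_combination (x ^ 2 + y ^ 2 + z ^ 2 + 1) / 2 * h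
  have sum_pow_six :
      x ^ 6 + y ^ 6 + z ^ 6 = (3 * (x ^ 4 + y ^ 4 + z ^ 4) - 1) / 2 + 3 * (x * y * z) ^ 2 := by
    linear_combination ((x ^ 2 + y ^ 2 + z ^ 2) ^ 2 - (x ^ 2 + y ^ 2 + z ^ 2) / 2 - 1 / 2
      - 3 * (x ^ 2 * y ^ 2 + y ^ 2 * z ^ 2 + z ^ 2 * x ^ 2)) * h
  exact ⟨by linear_combination sum_sq_mul_sq, by linear_combination 4 * (x * y * z) * h,
    by linear_combination 16 * sum_pow_six⟩
end

section
/- On S² ⊂ ℝ³, with O₃=xyz, O₄=x⁴+y⁴+z⁴, O₆=(x²−y²)(y²−z²)(z²−x²), one has Γ(O₃,O₆) = −18 O₃O₆, Γ(O₄,O₆) = 8O₆(2−3O₄), and Γ(O₆,O₆) = −54 O₃²O₄ + 18 O₃² − 3O₄² + 4O₄ − 1 − 36 O₆², modulo x²+y²+z²−1. -/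
open MvPolynomial

/-!
For homogeneous `f`, `g` of degrees `m`, `n`, Euler's identity `x·∇f = m f` turns the radial
term of `Γ` into `m n f g`, so `Γ(f,g) = ∇f·∇g − m n f g`. With `r² = x² + y² + z²`, the
Euclidean gradients of the octahedral invariants satisfy `∇O₃·∇O₆ = 0`, `∇O₄·∇O₆ = 16 r² O₆`
and `|∇O₆|² = −54 O₃²O₄ + 18 O₃²r⁴ − 3 O₄²r² + 4 O₄r⁶ − r¹⁰`, which gives the three formulas as
identities of homogeneous polynomials; on the sphere `r² = 1`.
-/

theorem sphGamma_eq_of_isHomogeneous {f g : MvPolynomial (Fin 3) ℝ} {m n : ℕ}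
    (hf : f.IsHomogeneous m) (hg : g.IsHomogeneous n) :
    sphGamma f g = ∑ i, pderiv i f * pderiv i g - (m * n) • (f * g) := by
  rw [sphGamma, hf.sum_X_mul_pderiv, hg.sum_X_mul_pderiv, smul_mul_smul_comm]

namespace Octahedral

noncomputable def O₃ : MvPolynomial (Fin 3) ℝ := X 0 * X 1 * X 2

noncomputable def O₄ : MvPolynomial (Fin 3) ℝ := X 0 ^ 4 + X 1 ^ 4 + X 2 ^ 4

noncomputable def O₆ : MvPolynomial (Fin 3) ℝ :=
  (X 0 ^ 2 - X 1 ^ 2) * (X 1 ^ 2 - X 2 ^ 2) * (X 2 ^ 2 - X 0 ^ 2)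

noncomputable def radiusSq : MvPolynomial (Fin 3) ℝ := X 0 ^ 2 + X 1 ^ 2 + X 2 ^ 2

theorem isHomogeneous_O₃ : O₃.IsHomogeneous 3 :=
  ((isHomogeneous_X ℝ 0).mul (isHomogeneous_X ℝ 1)).mul (isHomogeneous_X ℝ 2)

theorem isHomogeneous_O₄ : O₄.IsHomogeneous 4 :=
  ((isHomogeneous_X_pow 0 4).add (isHomogeneous_X_pow 1 4)).add (isHomogeneous_X_pow 2 4)

theorem isHomogeneous_O₆ : O₆.IsHomogeneous 6 :=
  have hdiff (i j : Fin 3) : (X i ^ 2 - X j ^ 2 : MvPolynomial (Fin 3) ℝ).IsHomogeneous 2 :=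
    (isHomogeneous_X_pow i 2).sub (isHomogeneous_X_pow j 2)
  ((hdiff 0 1).mul (hdiff 1 2)).mul (hdiff 2 0)

theorem sphGamma_O₃_O₆ : sphGamma O₃ O₆ = -18 * O₃ * O₆ := by
  rw [sphGamma_eq_of_isHomogeneous isHomogeneous_O₃ isHomogeneous_O₆]
  simp only [O₃, O₆, Fin.sum_univ_three, map_sub, Derivation.leibniz, Derivation.leibniz_pow,
    pderiv_X, Pi.single_eq_same, Pi.single_eq_of_ne, ne_eq, Fin.reduceEq, not_false_eq_true,
    Nat.reduceSub, smul_eq_mul, nsmul_eq_mul]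
  ring

theorem sphGamma_O₄_O₆ : sphGamma O₄ O₆ = 8 * O₆ * (2 * radiusSq - 3 * O₄) := by
  rw [sphGamma_eq_of_isHomogeneous isHomogeneous_O₄ isHomogeneous_O₆]
  simp only [O₄, O₆, radiusSq, Fin.sum_univ_three, map_add, map_sub, Derivation.leibniz,
    Derivation.leibniz_pow, pderiv_X, Pi.single_eq_same, Pi.single_eq_of_ne, ne_eq,
    Fin.reduceEq, not_false_eq_true, Nat.reduceSub, smul_eq_mul, nsmul_eq_mul]
  ring

theorem sphGamma_O₆_O₆ : sphGamma O₆ O₆ = -54 * O₃ ^ 2 * O₄ + 18 * O₃ ^ 2 * radiusSq ^ 2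
    - 3 * O₄ ^ 2 * radiusSq + 4 * O₄ * radiusSq ^ 3 - radiusSq ^ 5 - 36 * O₆ ^ 2 := by
  rw [sphGamma_eq_of_isHomogeneous isHomogeneous_O₆ isHomogeneous_O₆]
  simp only [O₃, O₄, O₆, radiusSq, Fin.sum_univ_three, map_sub, Derivation.leibniz,
    Derivation.leibniz_pow, pderiv_X, Pi.single_eq_same, Pi.single_eq_of_ne, ne_eq,
    Fin.reduceEq, not_false_eq_true, Nat.reduceSub, smul_eq_mul, nsmul_eq_mul]
  ring

end Octahedral

theorem stmt14 (x y z : ℝ) (h : x ^ 2 + y ^ 2 + z ^ 2 = 1) :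
    let O₃ : MvPolynomial (Fin 3) ℝ := X 0 * X 1 * X 2
    let O₄ : MvPolynomial (Fin 3) ℝ := X 0 ^ 4 + X 1 ^ 4 + X 2 ^ 4
    let O₆ : MvPolynomial (Fin 3) ℝ :=
      (X 0 ^ 2 - X 1 ^ 2) * (X 1 ^ 2 - X 2 ^ 2) * (X 2 ^ 2 - X 0 ^ 2)
    let ev : MvPolynomial (Fin 3) ℝ → ℝ := eval ![x, y, z]
    ev (sphGamma O₃ O₆) = -18 * ev O₃ * ev O₆ ∧
    ev (sphGamma O₄ O₆) = 8 * ev O₆ * (2 - 3 * ev O₄) ∧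
    ev (sphGamma O₆ O₆) = -54 * (ev O₃) ^ 2 * ev O₄ + 18 * (ev O₃) ^ 2 - 3 * (ev O₄) ^ 2
        + 4 * ev O₄ - 1 - 36 * (ev O₆) ^ 2 := by
  have hr : eval ![x, y, z] Octahedral.radiusSq = 1 := by simpa [Octahedral.radiusSq] using h
  have h₃ := congrArg (eval ![x, y, z]) Octahedral.sphGamma_O₃_O₆
  have h₄ := congrArg (eval ![x, y, z]) Octahedral.sphGamma_O₄_O₆
  have h₆ := congrArg (eval ![x, y, z]) Octahedral.sphGamma_O₆_O₆
  simp only [map_add, map_sub, map_mul, map_pow, map_neg, map_ofNat, hr, mul_one, one_pow]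
    at h₃ h₄ h₆
  exact ⟨h₃, h₄, h₆⟩
end

section
/- For the biderivation Γ₁₂ on ℝ[θ₁,θ₂,η] determined by Γ₁₂(θ₁,θ₁) = −9θ₁² − θ₂/2 + 1/2, Γ₁₂(θ₁,θ₂) = −12θ₁θ₂ + 4θ₁, Γ₁₂(θ₁,η) = −18θ₁η, Γ₁₂(θ₂,θ₂) = 48θ₁² − 16θ₂² + 24θ₂ − 8, Γ₁₂(θ₂,η) = −24θ₂η + 16η, Γ₁₂(η,η) = −54θ₁²θ₂ + 18θ₁² − 3θ₂² − 36η² + 4θ₂ − 1, the polynomial P₃ = 108θ₁⁴ + 36θ₁²θ₂ − 2θ₂³ − 20θ₁² + 5θ₂² + 4η² − 4θ₂ + 1 satisfies Γ₁₂(θ₁,P₃) = −36θ₁·P₃, Γ₁₂(θ₂,P₃) = (32 − 48θ₂)·P₃, and Γ₁₂(η,P₃) = −72η·P₃. -/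
open MvPolynomial

theorem Derivation.map_ofNat {R A M : Type*} [CommSemiring R] [CommSemiring A] [AddCommMonoid M]
    [Algebra R A] [Module A M] [Module R M] (D : Derivation R A M) (n : ℕ) [n.AtLeastTwo] :
    D (ofNat(n) : A) = 0 :=
  D.map_natCast n

section

variable {R : Type*} [CommRing R]

noncomputable def tetraP₃ : MvPolynomial (Fin 3) R :=
  108 * X 0 ^ 4 + 36 * X 0 ^ 2 * X 1 - 2 * X 1 ^ 3 - 20 * X 0 ^ 2 + 5 * X 1 ^ 2
    + 4 * X 2 ^ 2 - 4 * X 1 + 1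

theorem pderiv_zero_tetraP₃ :
    pderiv 0 (tetraP₃ : MvPolynomial (Fin 3) R) = 432 * X 0 ^ 3 + 72 * X 0 * X 1 - 40 * X 0 := by
  simp only [tetraP₃, map_add, map_sub, pderiv_mul, pderiv_pow, pderiv_X, Pi.single_apply,
    Derivation.map_ofNat, pderiv_one, Fin.reduceEq, if_true, if_false]
  ring

theorem pderiv_one_tetraP₃ :
    pderiv 1 (tetraP₃ : MvPolynomial (Fin 3) R) = 36 * X 0 ^ 2 - 6 * X 1 ^ 2 + 10 * X 1 - 4 := by
  simp only [tetraP₃, map_add, map_sub, pderiv_mul, pderiv_pow, pderiv_X, Pi.single_apply,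
    Derivation.map_ofNat, pderiv_one, Fin.reduceEq, if_true, if_false]
  ring

theorem pderiv_two_tetraP₃ : pderiv 2 (tetraP₃ : MvPolynomial (Fin 3) R) = 8 * X 2 := by
  simp only [tetraP₃, map_add, map_sub, pderiv_mul, pderiv_pow, pderiv_X, Pi.single_apply,
    Derivation.map_ofNat, pderiv_one, Fin.reduceEq, if_true, if_false]
  ring

end

/-- For the biderivation `Γ₁₂` on `ℝ[θ₁,θ₂,η]` determined by its values on generators,
the chain rule gives `Γ₁₂(θᵢ, P₃) = ∑ⱼ Γ₁₂(θᵢ, varⱼ) ∂ⱼP₃`. -/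
theorem stmt16 :
    let θ₁ : MvPolynomial (Fin 3) ℝ := X 0
    let θ₂ : MvPolynomial (Fin 3) ℝ := X 1
    let η : MvPolynomial (Fin 3) ℝ := X 2
    let g11 := -9 * θ₁ ^ 2 - C (1 / 2 : ℝ) * θ₂ + C (1 / 2 : ℝ)
    let g12 := -12 * θ₁ * θ₂ + 4 * θ₁
    let g13 := -18 * θ₁ * η
    let g22 := 48 * θ₁ ^ 2 - 16 * θ₂ ^ 2 + 24 * θ₂ - 8
    let g23 := -24 * θ₂ * η + 16 * η
    let g33 := -54 * θ₁ ^ 2 * θ₂ + 18 * θ₁ ^ 2 - 3 * θ₂ ^ 2 - 36 * η ^ 2 + 4 * θ₂ - 1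
    let P₃ : MvPolynomial (Fin 3) ℝ :=
      108 * θ₁ ^ 4 + 36 * θ₁ ^ 2 * θ₂ - 2 * θ₂ ^ 3 - 20 * θ₁ ^ 2 + 5 * θ₂ ^ 2
        + 4 * η ^ 2 - 4 * θ₂ + 1
    g11 * pderiv 0 P₃ + g12 * pderiv 1 P₃ + g13 * pderiv 2 P₃ = -36 * θ₁ * P₃ ∧
    g12 * pderiv 0 P₃ + g22 * pderiv 1 P₃ + g23 * pderiv 2 P₃ = (32 - 48 * θ₂) * P₃ ∧
    g13 * pderiv 0 P₃ + g23 * pderiv 1 P₃ + g33 * pderiv 2 P₃ = -72 * η * P₃ := by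
  intro θ₁ θ₂ η g11 g12 g13 g22 g23 g33 P₃
  have two_mul_C_half : (2 : MvPolynomial (Fin 3) ℝ) * C (1 / 2) = 1 := by
    rw [← map_ofNat C 2, ← C_mul]
    norm_num
  have h₀ : pderiv 0 P₃ = 432 * θ₁ ^ 3 + 72 * θ₁ * θ₂ - 40 * θ₁ := pderiv_zero_tetraP₃
  have h₁ : pderiv 1 P₃ = 36 * θ₁ ^ 2 - 6 * θ₂ ^ 2 + 10 * θ₂ - 4 := pderiv_one_tetraP₃
  have h₂ : pderiv 2 P₃ = 8 * η := pderiv_two_tetraP₃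
  rw [h₀, h₁, h₂]
  refine ⟨?_, ?_, ?_⟩
  · -- `ring` sees `C (1 / 2)` in `g11` as an atom; it cancels against `∂₀P₃ = 2 (216θ₁³ + 36θ₁θ₂ - 20θ₁)`.
    linear_combination (1 - θ₂) * (216 * θ₁ ^ 3 + 36 * θ₁ * θ₂ - 20 * θ₁) * two_mul_C_half
  · ring
  · ring
end

section
/- The determinant of the 3×3 symmetric matrix Γ₁₂ with entries Γ₁₂(θ₁,θ₁)=−9θ₁²−θ₂/2+1/2, Γ₁₂(θ₁,θ₂)=−12θ₁θ₂+4θ₁, Γ₁₂(θ₁,η)=−18θ₁η, Γ₁₂(θ₂,θ₂)=48θ₁²−16θ₂²+24θ₂−8, Γ₁₂(θ₂,η)=−24θ₂η+16η, Γ₁₂(η,η)=−54θ₁²θ₂+18θ₁²−3θ₂²−36η²+4θ₂−1 factorizes as 4(3θ₂−1)(18θ₁²+θ₂−1)(108θ₁⁴+36θ₁²θ₂−2θ₂³−20θ₁²+5θ₂²+4η²−4θ₂+1). -/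
theorem stmt17 (θ₁ θ₂ η : ℝ) :
    Matrix.det !![-9 * θ₁ ^ 2 - θ₂ / 2 + 1 / 2, -12 * θ₁ * θ₂ + 4 * θ₁, -18 * θ₁ * η;
                  -12 * θ₁ * θ₂ + 4 * θ₁, 48 * θ₁ ^ 2 - 16 * θ₂ ^ 2 + 24 * θ₂ - 8,
                    -24 * θ₂ * η + 16 * η;
                  -18 * θ₁ * η, -24 * θ₂ * η + 16 * η,
                    -54 * θ₁ ^ 2 * θ₂ + 18 * θ₁ ^ 2 - 3 * θ₂ ^ 2 - 36 * η ^ 2 + 4 * θ₂ - 1]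
      = 4 * (3 * θ₂ - 1) * (18 * θ₁ ^ 2 + θ₂ - 1)
          * (108 * θ₁ ^ 4 + 36 * θ₁ ^ 2 * θ₂ - 2 * θ₂ ^ 3 - 20 * θ₁ ^ 2 + 5 * θ₂ ^ 2
              + 4 * η ^ 2 - 4 * θ₂ + 1) := by
  rw [Matrix.det_fin_three]
  simp only [Matrix.of_apply, Matrix.cons_val_zero, Matrix.cons_val_one, Matrix.cons_val_two,
    Matrix.head_cons, Matrix.tail_cons]
  ring
end

section
/- Let G ⊂ O(4) be the group of order 2p² generated by N₁ = diag(M_p, I₂), N₂ = diag(I₂, M_p), and the swap J of the two ℝ² factors, where M_p is rotation by 2π/p and p an odd prime. Then by Molien's formula the Hilbert series of the invariant ring of G equals (1 + t^p + 2t^{p+2} + 2t^{2p} + t^{2p+2} + t^{3p+2}) / ((1−t²)(1−t⁴)(1−t^{2p})(1−t^p)). -/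
open Real Matrix

/-- The block-diagonal element `N₁^{k₁} N₂^{k₂}` of the group, acting by rotation of
angle `a` on the first `ℝ²` factor and angle `b` on the second. -/
noncomputable def rotBlock (a b : ℝ) : Matrix (Fin 4) (Fin 4) ℝ :=
  !![Real.cos a, -Real.sin a, 0, 0;
     Real.sin a, Real.cos a, 0, 0;
     0, 0, Real.cos b, -Real.sin b;
     0, 0, Real.sin b, Real.cos b]

/-- The element `J` swapping the two `ℝ²` factors of `ℝ⁴`. -/
def swapJ : Matrix (Fin 4) (Fin 4) ℝ :=
  !![0, 0, 1, 0;
     0, 0, 0, 1;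
     1, 0, 0, 0;
     0, 1, 0, 0]

/-!
Split the Molien sum over the two cosets of the rotation subgroup. Since `N₁^{k₁}N₂^{k₂}` is
block diagonal, `det (1 - t N₁^{k₁}N₂^{k₂})` is a product of two factors `1 - 2t cos θ + t²`;
for `J N₁^{k₁}N₂^{k₂}` the Schur complement gives `det (1 - t² R(θ₁ + θ₂))` with `R` the plane
rotation, a single such factor in `t²`. Writing `1 - 2s cos θ + s² = (1 - s w)(1 - s w⁻¹)`
with `w = e^{iθ}` a `p`-th root of unity, partial fractions reduce everything to
`∑_{w^p = 1} 1/(1 - s w) = p / (1 - s^p)`, which follows from expanding `1/(1 - s w)` as a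
geometric sum of length `p` and the orthogonality of the powers of a primitive root of unity.
-/

open Finset

section Determinants

noncomputable def planeRotation (θ : ℝ) : Matrix (Fin 2) (Fin 2) ℝ :=
  !![cos θ, -sin θ; sin θ, cos θ]

lemma planeRotation_mul_planeRotation (a b : ℝ) :
    planeRotation a * planeRotation b = planeRotation (a + b) := by
  ext i j
  fin_cases i <;> fin_cases j <;>
    simp [planeRotation, Matrix.mul_apply, cos_add, sin_add] <;> ring

lemma det_one_sub_smul_planeRotation (s θ : ℝ) :
    (1 - s • planeRotation θ).det = 1 - 2 * s * cos θ + s ^ 2 := by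
  have h : 1 - s • planeRotation θ
      = !![1 - s * cos θ, s * sin θ; -(s * sin θ), 1 - s * cos θ] := by
    ext i j
    fin_cases i <;> fin_cases j <;> simp [planeRotation]
  rw [h, det_fin_two_of]
  linear_combination s ^ 2 * sin_sq_add_cos_sq θ

lemma rotBlock_eq_reindex_fromBlocks (a b : ℝ) : rotBlock a b =
    reindex finSumFinEquiv finSumFinEquiv
      (fromBlocks (planeRotation a) 0 0 (planeRotation b)) := by
  ext i j
  fin_cases i <;> fin_cases j <;> rfl

lemma swapJ_mul_rotBlock_eq_reindex_fromBlocks (a b : ℝ) : swapJ * rotBlock a b =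
    reindex finSumFinEquiv finSumFinEquiv
      (fromBlocks 0 (planeRotation b) (planeRotation a) 0) := by
  ext i j
  fin_cases i <;> fin_cases j <;>
    simp [swapJ, rotBlock, Matrix.mul_apply, Fin.sum_univ_succ] <;> rfl

variable {R : Type*} [CommRing R]

lemma det_one_sub_smul_reindex {m n : Type*} [Fintype m] [DecidableEq m] [Fintype n]
    [DecidableEq n] (e : m ≃ n) (s : R) (M : Matrix m m R) :
    (1 - s • reindex e e M).det = (1 - s • M).det := by
  rw [← det_reindex_self e (1 - s • M)]
  simp [submatrix_sub, submatrix_smul, submatrix_one_equiv]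

lemma one_sub_smul_fromBlocks {m n : Type*} [DecidableEq m] [DecidableEq n] (s : R)
    (A : Matrix m m R) (B : Matrix m n R) (C : Matrix n m R) (D : Matrix n n R) :
    1 - s • fromBlocks A B C D = fromBlocks (1 - s • A) (-(s • B)) (-(s • C)) (1 - s • D) := by
  rw [← fromBlocks_one, fromBlocks_smul, sub_eq_add_neg, fromBlocks_neg, fromBlocks_add]
  simp only [sub_eq_add_neg, zero_add]

end Determinants

lemma det_one_sub_smul_rotBlock (a b t : ℝ) : (1 - t • rotBlock a b).det
    = (1 - 2 * t * cos a + t ^ 2) * (1 - 2 * t * cos b + t ^ 2) := by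
  rw [rotBlock_eq_reindex_fromBlocks, det_one_sub_smul_reindex, one_sub_smul_fromBlocks,
    smul_zero, neg_zero, det_fromBlocks_zero₂₁, det_one_sub_smul_planeRotation,
    det_one_sub_smul_planeRotation]

lemma det_one_sub_smul_swapJ_mul_rotBlock (a b t : ℝ) : (1 - t • (swapJ * rotBlock a b)).det
    = 1 - 2 * t ^ 2 * cos (a + b) + (t ^ 2) ^ 2 := by
  rw [swapJ_mul_rotBlock_eq_reindex_fromBlocks, det_one_sub_smul_reindex,
    one_sub_smul_fromBlocks, smul_zero, sub_zero, det_fromBlocks_one₁₁, neg_mul_neg,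
    smul_mul_smul_comm, planeRotation_mul_planeRotation, ← sq, det_one_sub_smul_planeRotation]

section RootsOfUnity

variable {K : Type*} [Field K] {ζ : K} {p : ℕ}

lemma IsPrimitiveRoot.sum_pow_pow_eq_ite (hζ : IsPrimitiveRoot ζ p) {i : ℕ} (hi : i < p) :
    ∑ k ∈ range p, (ζ ^ i) ^ k = if i = 0 then (p : K) else 0 := by
  split_ifs with h
  · simp [h]
  · rw [geom_sum_eq (hζ.pow_ne_one_of_pos_of_lt h hi), ← pow_mul, mul_comm, pow_mul,
      hζ.pow_eq_one, one_pow, sub_self, zero_div]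

lemma inv_one_sub_eq_geom_sum_div {x : K} {n : ℕ} (hx : x ^ n ≠ 1) :
    (1 - x)⁻¹ = (∑ i ∈ range n, x ^ i) / (1 - x ^ n) := by
  have hx1 : 1 - x ≠ 0 := fun h => hx (by rw [← sub_eq_zero.mp h, one_pow])
  rw [eq_div_iff (sub_ne_zero.mpr hx.symm), ← mul_neg_geom_sum, inv_mul_cancel_left₀ hx1]

lemma IsPrimitiveRoot.sum_inv_one_sub_mul (hζ : IsPrimitiveRoot ζ p) {s u : K}
    (hs : s ^ p ≠ 1) (hu : u ^ p = 1) :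
    ∑ k ∈ range p, (1 - s * (u * ζ ^ k))⁻¹ = p / (1 - s ^ p) := by
  have hp : p ≠ 0 := by rintro rfl; exact hs (pow_zero s)
  have hpow (k : ℕ) : (s * (u * ζ ^ k)) ^ p = s ^ p := by
    rw [mul_pow, mul_pow, ← pow_mul, mul_comm k, pow_mul, hζ.pow_eq_one, hu, one_pow, mul_one,
      mul_one]
  simp_rw [inv_one_sub_eq_geom_sum_div (hpow _ ▸ hs), hpow, ← sum_div]
  congr 1
  calc ∑ k ∈ range p, ∑ i ∈ range p, (s * (u * ζ ^ k)) ^ i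
      = ∑ i ∈ range p, (s * u) ^ i * ∑ k ∈ range p, (ζ ^ i) ^ k := by
        rw [sum_comm]
        refine sum_congr rfl fun i _ => ?_
        rw [mul_sum]
        refine sum_congr rfl fun k _ => ?_
        ring
    _ = p := by
        rw [sum_congr rfl fun i hi => by rw [hζ.sum_pow_pow_eq_ite (mem_range.mp hi)]]
        simp [mul_ite, hp]

lemma inv_one_sub_mul_mul_one_sub_mul_eq {s w v : K} (hwv : w * v = 1) (h₁ : 1 - s * w ≠ 0)
    (h₂ : 1 - s * v ≠ 0) (hs : 1 - s ^ 2 ≠ 0) :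
    ((1 - s * w) * (1 - s * v))⁻¹ = ((1 - s * w)⁻¹ + (1 - s * v)⁻¹ - 1) / (1 - s ^ 2) := by
  field_simp
  linear_combination s ^ 2 * hwv

lemma IsPrimitiveRoot.sum_inv_one_sub_mul_mul_one_sub_mul_inv (hζ : IsPrimitiveRoot ζ p)
    {s : K} (hs2 : s ^ 2 ≠ 1) (hsp : s ^ p ≠ 1) (m : ℕ) :
    ∑ k ∈ range p, ((1 - s * (ζ ^ m * ζ ^ k)) * (1 - s * (ζ ^ m * ζ ^ k)⁻¹))⁻¹
      = p * (1 + s ^ p) / ((1 - s ^ 2) * (1 - s ^ p)) := by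
  have hp : p ≠ 0 := by rintro rfl; exact hsp (pow_zero s)
  have hroot {w : K} (hw : w ^ p = 1) : 1 - s * w ≠ 0 := fun h =>
    hsp (by simpa [mul_pow, hw] using congrArg (· ^ p) (sub_eq_zero.mp h).symm)
  have hterm {w : K} (hw : w ^ p = 1) : ((1 - s * w) * (1 - s * w⁻¹))⁻¹
      = ((1 - s * w)⁻¹ + (1 - s * w⁻¹)⁻¹ - 1) / (1 - s ^ 2) :=
    inv_one_sub_mul_mul_one_sub_mul_eq (mul_inv_cancel₀ (by rintro rfl; simp [hp] at hw))
      (hroot hw) (hroot (by rw [inv_pow, hw, inv_one])) (sub_ne_zero.mpr hs2.symm)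
  have hpow {w : K} (hw : w ^ p = 1) (m : ℕ) : (w ^ m) ^ p = 1 := by
    rw [← pow_mul, mul_comm, pow_mul, hw, one_pow]
  rw [sum_congr rfl fun k _ =>
    hterm (by rw [mul_pow, hpow hζ.pow_eq_one, hpow hζ.pow_eq_one, one_mul])]
  simp_rw [mul_inv, ← inv_pow, ← sum_div, sum_sub_distrib, sum_add_distrib,
    hζ.sum_inv_one_sub_mul hsp (hpow hζ.pow_eq_one m),
    hζ.inv.sum_inv_one_sub_mul hsp (hpow hζ.inv.pow_eq_one m), sum_const, card_range,
    nsmul_eq_mul, mul_one]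
  field_simp
  ring

end RootsOfUnity

lemma ofReal_one_sub_two_mul_cos_add_sq (s θ : ℝ) :
    ((1 - 2 * s * cos θ + s ^ 2 : ℝ) : ℂ)
      = (1 - s * Complex.exp (θ * Complex.I)) * (1 - s * (Complex.exp (θ * Complex.I))⁻¹) := by
  have h2cos : 2 * Complex.cos θ
      = Complex.exp (θ * Complex.I) + (Complex.exp (θ * Complex.I))⁻¹ := by
    rw [Complex.two_cos, ← Complex.exp_neg]
    ring_nf
  push_cast
  linear_combination -(s : ℂ) * h2cos - (s : ℂ) ^ 2 * mul_inv_cancel₀ (Complex.exp_ne_zero _)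

lemma sum_inv_one_sub_two_mul_cos_add {p : ℕ} {s : ℝ} (hs2 : s ^ 2 ≠ 1) (hsp : s ^ p ≠ 1)
    (m : ℕ) :
    ∑ k : Fin p, (1 - 2 * s * cos (2 * π * m / p + 2 * π * k / p) + s ^ 2)⁻¹
      = p * (1 + s ^ p) / ((1 - s ^ 2) * (1 - s ^ p)) := by
  have hp : p ≠ 0 := by rintro rfl; exact hsp (pow_zero s)
  set ζ := Complex.exp (2 * π * Complex.I / p)
  have hexp (k : ℕ) : Complex.exp ((2 * π * k / p : ℝ) * Complex.I) = ζ ^ k := by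
    rw [← Complex.exp_nat_mul]
    push_cast
    ring_nf
  have hterm (k : ℕ) : (((1 - 2 * s * cos (2 * π * m / p + 2 * π * k / p) + s ^ 2)⁻¹ : ℝ) : ℂ)
      = ((1 - s * (ζ ^ m * ζ ^ k)) * (1 - s * (ζ ^ m * ζ ^ k)⁻¹))⁻¹ := by
    rw [Complex.ofReal_inv, ofReal_one_sub_two_mul_cos_add_sq, Complex.ofReal_add, add_mul,
      Complex.exp_add, hexp, hexp]
  rw [← Complex.ofReal_inj, Complex.ofReal_sum]
  simp_rw [hterm]
  rw [Fin.sum_univ_eq_sum_range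
      (fun k => ((1 - s * (ζ ^ m * ζ ^ k)) * (1 - s * (ζ ^ m * ζ ^ k)⁻¹))⁻¹),
    (Complex.isPrimitiveRoot_exp p hp).sum_inv_one_sub_mul_mul_one_sub_mul_inv
      (by exact_mod_cast hs2) (by exact_mod_cast hsp)]
  norm_cast

lemma pow_ne_one_of_abs_lt_one {R : Type*} [Ring R] [LinearOrder R] [IsStrictOrderedRing R]
    {t : R} (ht : |t| < 1) {n : ℕ} (hn : n ≠ 0) : t ^ n ≠ 1 :=
  ((le_abs_self _).trans_lt (by rw [abs_pow]; exact pow_lt_one₀ (abs_nonneg t) ht hn)).ne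

theorem stmt19_general (p : ℕ) (hp : p.Prime) (t : ℝ) (ht : |t| < 1) :
    (1 / (2 * (p : ℝ) ^ 2)) *
      ∑ k₁ : Fin p, ∑ k₂ : Fin p,
        (((1 - t • rotBlock (2 * π * k₁ / p) (2 * π * k₂ / p)).det)⁻¹ +
         ((1 - t • (swapJ * rotBlock (2 * π * k₁ / p) (2 * π * k₂ / p))).det)⁻¹)
      = (1 + t ^ p + 2 * t ^ (p + 2) + 2 * t ^ (2 * p) + t ^ (2 * p + 2) + t ^ (3 * p + 2))
        / ((1 - t ^ 2) * (1 - t ^ 4) * (1 - t ^ (2 * p)) * (1 - t ^ p)) := by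
  have hne {n : ℕ} (hn : n ≠ 0) : t ^ n ≠ 1 := pow_ne_one_of_abs_lt_one ht hn
  have h2p : 2 * p ≠ 0 := mul_ne_zero two_ne_zero hp.ne_zero
  have hrot := sum_inv_one_sub_two_mul_cos_add (hne two_ne_zero) (hne hp.ne_zero) 0
  have hswap := sum_inv_one_sub_two_mul_cos_add (s := t ^ 2) (p := p)
    (by rw [← pow_mul]; exact hne four_ne_zero) (by rw [← pow_mul]; exact hne h2p)
  simp only [Nat.cast_zero, mul_zero, zero_div, zero_add] at hrot
  simp only [det_one_sub_smul_rotBlock, det_one_sub_smul_swapJ_mul_rotBlock, mul_inv,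
    sum_add_distrib, ← mul_sum, ← sum_mul, hrot, hswap, sum_const, card_univ, Fintype.card_fin,
    nsmul_eq_mul]
  rw [← pow_mul, ← pow_mul]
  have hd2 := sub_ne_zero.mpr (hne two_ne_zero).symm
  have hd4 := sub_ne_zero.mpr (hne four_ne_zero).symm
  have hdp := sub_ne_zero.mpr (hne hp.ne_zero).symm
  have hd2p := sub_ne_zero.mpr (hne h2p).symm
  have hp0 : (p : ℝ) ≠ 0 := by exact_mod_cast hp.ne_zero
  field_simp
  ring

/-- Molien's formula for the group of order `2p²` generated by `N₁`, `N₂` and `J`: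
the Hilbert series of its invariant ring, computed as
`(1/|G|) ∑_{g ∈ G} 1/det(Id − t g)`, equals the stated rational function. -/
theorem stmt19 (p : ℕ) (hp : p.Prime) (hodd : Odd p) (t : ℝ) (ht : |t| < 1) :
    (1 / (2 * (p : ℝ) ^ 2)) *
      ∑ k₁ : Fin p, ∑ k₂ : Fin p,
        (((1 - t • rotBlock (2 * π * k₁ / p) (2 * π * k₂ / p)).det)⁻¹ +
         ((1 - t • (swapJ * rotBlock (2 * π * k₁ / p) (2 * π * k₂ / p))).det)⁻¹)
      = (1 + t ^ p + 2 * t ^ (p + 2) + 2 * t ^ (2 * p) + t ^ (2 * p + 2) + t ^ (3 * p + 2))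
        / ((1 - t ^ 2) * (1 - t ^ 4) * (1 - t ^ (2 * p)) * (1 - t ^ p)) :=
  stmt19_general p hp t ht
end
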